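/- arXiv:2101.04940 — 5 statements merged into one kernel-verified Lean document; each statement's English description precedes it below -/
import Mathlib

section
/- Let E be a finite-dimensional real inner product space and let S and Sᶜ be linear subspaces of E with S ∩ Sᶜ = {0} and S + Sᶜ = E (a direct-sum decomposition that is not assumed orthogonal). Let π_S and π_{Sᶜ} be the orthogonal projections of E onto S and onto Sᶜ. Then the operator norms of the compositions satisfy ‖π_S ∘ π_{Sᶜ}‖ < 1 and ‖π_{Sᶜ} ∘ π_S‖ < 1. -/
/-! If `‖π_S (π_Sc x)‖ = ‖x‖`, then neither projection shortens `x`, so `x ∈ S ∩ Sc = 0`.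
Hence `x ↦ ‖π_S (π_Sc x)‖` is `< 1` on the unit sphere, and by compactness of the sphere in finite
dimension its maximum there, which bounds the operator norm, is `< 1` as well. -/

namespace ContinuousLinearMap

theorem opNorm_lt_of_unit_norm {𝕜 E F : Type*} [RCLike 𝕜] [NormedAddCommGroup E]
    [NormedSpace 𝕜 E] [FiniteDimensional 𝕜 E] [SeminormedAddCommGroup F] [NormedSpace 𝕜 F]
    {f : E →L[𝕜] F} {C : ℝ}
    (hC : 0 < C) (hf : ∀ x, ‖x‖ = 1 → ‖f x‖ < C) : ‖f‖ < C := by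
  rcases (Metric.sphere (0 : E) 1).eq_empty_or_nonempty with hempty | hne
  · refine (opNorm_le_of_unit_norm le_rfl fun x hx => ?_).trans_lt hC
    have hx_mem : x ∈ Metric.sphere (0 : E) 1 := by simpa using hx
    simp [hempty] at hx_mem
  · have : ProperSpace E := FiniteDimensional.proper 𝕜 E
    obtain ⟨x₀, hx₀_mem, hmax⟩ := (isCompact_sphere (0 : E) 1).exists_isMaxOn hne
      (continuous_norm.comp f.continuous).continuousOn
    have hx₀ : ‖x₀‖ = 1 := by simpa using hx₀_mem
    refine (opNorm_le_of_unit_norm (norm_nonneg _) fun x hx => ?_).trans_lt (hf x₀ hx₀)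
    exact hmax (by simpa using hx)

end ContinuousLinearMap

namespace Submodule

variable {𝕜 E : Type*} [RCLike 𝕜] [NormedAddCommGroup E] [InnerProductSpace 𝕜 E]
  (U V : Submodule 𝕜 E) [U.HasOrthogonalProjection] [V.HasOrthogonalProjection]

theorem norm_starProjection_starProjection_lt {x : E} (hx : x ∉ U ⊓ V) :
    ‖U.starProjection (V.starProjection x)‖ < ‖x‖ := by
  have hU := U.norm_starProjection_apply_le (V.starProjection x)
  have hV := V.norm_starProjection_apply_le x
  refine (hU.trans hV).lt_of_ne fun heq => hx ⟨?_, ?_⟩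
  · have hxV : x ∈ V := (V.mem_iff_norm_starProjection x).mpr (by linarith)
    rw [V.starProjection_eq_self_iff.mpr hxV] at heq
    exact (U.mem_iff_norm_starProjection x).mpr heq
  · exact (V.mem_iff_norm_starProjection x).mpr (by linarith)

theorem norm_starProjection_comp_starProjection_lt_one [FiniteDimensional 𝕜 E]
    (h : U ⊓ V = ⊥) : ‖U.starProjection ∘L V.starProjection‖ < 1 :=
  ContinuousLinearMap.opNorm_lt_of_unit_norm one_pos fun x hx => by
    have hx0 : x ∉ U ⊓ V := by
      rw [h, mem_bot, ← norm_eq_zero, hx]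
      exact one_ne_zero
    simpa [hx] using U.norm_starProjection_starProjection_lt V hx0

end Submodule

theorem projection_composition_norm_lt_one_general
    {E : Type*} [NormedAddCommGroup E] [InnerProductSpace ℝ E] [FiniteDimensional ℝ E]
    (S Sc : Submodule ℝ E) (hinf : S ⊓ Sc = ⊥) :
    ‖(S.subtypeL ∘L S.orthogonalProjectionOnto) ∘L (Sc.subtypeL ∘L Sc.orthogonalProjectionOnto)‖ < 1 ∧
    ‖(Sc.subtypeL ∘L Sc.orthogonalProjectionOnto) ∘L (S.subtypeL ∘L S.orthogonalProjectionOnto)‖ < 1 :=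
  ⟨S.norm_starProjection_comp_starProjection_lt_one Sc hinf,
    Sc.norm_starProjection_comp_starProjection_lt_one S (inf_comm S Sc ▸ hinf)⟩

/-- Let `E` be a finite-dimensional real inner product space and let `S`, `Sc`
be linear subspaces of `E` with `S ⊓ Sc = ⊥` and `S ⊔ Sc = ⊤` (a direct-sum decomposition that
is not assumed orthogonal). Then the operator norms of the compositions of the orthogonal
projections onto `S` and onto `Sc` satisfy `‖π_S ∘ π_Sc‖ < 1` and `‖π_Sc ∘ π_S‖ < 1`. -/
theorem projection_composition_norm_lt_one
    {E : Type*} [NormedAddCommGroup E] [InnerProductSpace ℝ E] [FiniteDimensional ℝ E]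
    (S Sc : Submodule ℝ E) (hinf : S ⊓ Sc = ⊥) (hsup : S ⊔ Sc = ⊤) :
    ‖(S.subtypeL ∘L S.orthogonalProjectionOnto) ∘L (Sc.subtypeL ∘L Sc.orthogonalProjectionOnto)‖ < 1 ∧
    ‖(Sc.subtypeL ∘L Sc.orthogonalProjectionOnto) ∘L (S.subtypeL ∘L S.orthogonalProjectionOnto)‖ < 1 :=
  projection_composition_norm_lt_one_general S Sc hinf
end

section
/- Let E be a finite-dimensional real inner product space and let S and Sᶜ be linear subspaces of E with S ∩ Sᶜ = {0} and S + Sᶜ = E. Let π_S and π_{Sᶜ} be the orthogonal projections of E onto S and onto Sᶜ. Then the linear maps Id − π_S ∘ π_{Sᶜ} : E → E and Id − π_{Sᶜ} ∘ π_S : E → E are bijective (linear isomorphisms of E). -/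
/-!
A fixed point `x = π_K (π_L x)` lies in `K`, and `‖x‖ = ‖π_K (π_L x)‖ ≤ ‖π_L x‖ ≤ ‖x‖` forces
`‖π_L x‖ = ‖x‖`, i.e. `x ∈ L`. So when `K ⊓ L = ⊥` the kernel of `Id − π_K ∘ π_L` is trivial, and
an injective endomorphism of a finite-dimensional space is bijective.
-/

namespace Submodule

variable {𝕜 E : Type*} [RCLike 𝕜] [NormedAddCommGroup E] [InnerProductSpace 𝕜 E]

theorem mem_inf_of_starProjection_starProjection_eq (K L : Submodule 𝕜 E)
    [K.HasOrthogonalProjection] [L.HasOrthogonalProjection] {x : E}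
    (hx : K.starProjection (L.starProjection x) = x) : x ∈ K ⊓ L := by
  have hxK : x ∈ K := hx ▸ K.starProjection_apply_mem _
  have hnorm : ‖L.starProjection x‖ = ‖x‖ := by
    refine le_antisymm (L.norm_starProjection_apply_le x) ?_
    calc ‖x‖ = ‖K.starProjection (L.starProjection x)‖ := by rw [hx]
      _ ≤ ‖L.starProjection x‖ := K.norm_starProjection_apply_le _
  exact ⟨hxK, (L.mem_iff_norm_starProjection x).mpr hnorm⟩

theorem injective_id_sub_starProjection_comp_starProjection (K L : Submodule 𝕜 E)
    [K.HasOrthogonalProjection] [L.HasOrthogonalProjection] (hKL : K ⊓ L = ⊥) :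
    Function.Injective (ContinuousLinearMap.id 𝕜 E - K.starProjection ∘L L.starProjection) := by
  rw [← ContinuousLinearMap.coe_coe, ← LinearMap.ker_eq_bot, eq_bot_iff]
  intro x hx
  rw [← hKL]
  exact mem_inf_of_starProjection_starProjection_eq K L (sub_eq_zero.mp hx).symm

theorem bijective_id_sub_starProjection_comp_starProjection [FiniteDimensional 𝕜 E]
    (K L : Submodule 𝕜 E) (hKL : K ⊓ L = ⊥) :
    Function.Bijective (ContinuousLinearMap.id 𝕜 E - K.starProjection ∘L L.starProjection) :=
  have hinj := injective_id_sub_starProjection_comp_starProjection K L hKL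
  ⟨hinj, LinearMap.injective_iff_surjective.mp hinj⟩

end Submodule

theorem id_sub_projection_composition_bijective_general
    {E : Type*} [NormedAddCommGroup E] [InnerProductSpace ℝ E] [FiniteDimensional ℝ E]
    (S Sc : Submodule ℝ E) (hinf : S ⊓ Sc = ⊥) :
    Function.Bijective
      (fun x : E => x - (Submodule.orthogonalProjectionOnto S ((Submodule.orthogonalProjectionOnto Sc x : E)) : E)) ∧
    Function.Bijective
      (fun x : E => x - (Submodule.orthogonalProjectionOnto Sc ((Submodule.orthogonalProjectionOnto S x : E)) : E)) :=
  ⟨S.bijective_id_sub_starProjection_comp_starProjection Sc hinf,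
    Sc.bijective_id_sub_starProjection_comp_starProjection S (inf_comm S Sc ▸ hinf)⟩

/-- Let `E` be a finite-dimensional real inner product space and let `S`, `Sc`
be linear subspaces of `E` with `S ⊓ Sc = ⊥` and `S ⊔ Sc = ⊤`. Let `π_S`, `π_Sc` be the
orthogonal projections of `E` onto `S` and onto `Sc`. Then the linear maps
`Id − π_S ∘ π_Sc : E → E` and `Id − π_Sc ∘ π_S : E → E` are bijective. -/
theorem id_sub_projection_composition_bijective
    {E : Type*} [NormedAddCommGroup E] [InnerProductSpace ℝ E] [FiniteDimensional ℝ E]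
    (S Sc : Submodule ℝ E) (hinf : S ⊓ Sc = ⊥) (hsup : S ⊔ Sc = ⊤) :
    Function.Bijective
      (fun x : E => x - (Submodule.orthogonalProjectionOnto S ((Submodule.orthogonalProjectionOnto Sc x : E)) : E)) ∧
    Function.Bijective
      (fun x : E => x - (Submodule.orthogonalProjectionOnto Sc ((Submodule.orthogonalProjectionOnto S x : E)) : E)) :=
  id_sub_projection_composition_bijective_general S Sc hinf
end

section
/- Let E be a finite-dimensional real inner product space and let S and Sᶜ be linear subspaces of E with S ∩ Sᶜ = {0} and S + Sᶜ = E, with orthogonal projections π_S and π_{Sᶜ}. Let α ∈ [0,1) be such that the operator norms satisfy ‖π_S ∘ π_{Sᶜ}‖ ≤ α and ‖π_{Sᶜ} ∘ π_S‖ ≤ α. Then for every a ∈ E one has the two-sided norm equivalence ‖π_S(a)‖ + ‖π_{Sᶜ}(a)‖ ≤ 2‖a‖ and ‖a‖ ≤ (2/(1−α)) (‖π_S(a)‖ + ‖π_{Sᶜ}(a)‖). -/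
/-!
Decompose `a = s + c` with `s ∈ S`, `c ∈ Sᶜ`. Since `π_S s = s` and
`‖π_S c‖ = ‖π_S π_{Sᶜ} c‖ ≤ α ‖c‖`, the triangle inequality gives `‖π_S a‖ ≥ ‖s‖ - α ‖c‖`, and
symmetrically `‖π_{Sᶜ} a‖ ≥ ‖c‖ - α ‖s‖`. Adding, `‖π_S a‖ + ‖π_{Sᶜ} a‖ ≥ (1 - α)(‖s‖ + ‖c‖) ≥
(1 - α) ‖a‖`. The other inequality holds because orthogonal projections do not increase norms.
-/

theorem norm_sub_mul_norm_le_norm_map_add {E F : Type*} [SeminormedAddCommGroup E]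
    [FunLike F E E] [AddHomClass F E E] (f : F) {α : ℝ} {s c : E} (hs : f s = s)
    (hc : ‖f c‖ ≤ α * ‖c‖) :
    ‖s‖ - α * ‖c‖ ≤ ‖f (s + c)‖ := by
  have h := norm_sub_le (s + f c) (f c)
  rw [add_sub_cancel_right] at h
  rw [map_add, hs]
  linarith

namespace Submodule

variable {𝕜 E : Type*} [RCLike 𝕜] [NormedAddCommGroup E] [InnerProductSpace 𝕜 E]

theorem norm_apply_le_of_norm_comp_starProjection_le {F : Type*} [SeminormedAddCommGroup F]
    [NormedSpace 𝕜 F] (T : E →L[𝕜] F) (K : Submodule 𝕜 E) [K.HasOrthogonalProjection] {α : ℝ}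
    (h : ‖T ∘L K.starProjection‖ ≤ α) {x : E} (hx : x ∈ K) : ‖T x‖ ≤ α * ‖x‖ := by
  simpa [starProjection_eq_self_iff.mpr hx] using (T ∘L K.starProjection).le_of_opNorm_le h x

theorem one_sub_mul_norm_le_norm_starProjection_add (K L : Submodule 𝕜 E)
    [K.HasOrthogonalProjection] [L.HasOrthogonalProjection] (hsup : K ⊔ L = ⊤) {α : ℝ}
    (hα : α ≤ 1) (hKL : ‖K.starProjection ∘L L.starProjection‖ ≤ α)
    (hLK : ‖L.starProjection ∘L K.starProjection‖ ≤ α) (a : E) :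
    (1 - α) * ‖a‖ ≤ ‖K.starProjection a‖ + ‖L.starProjection a‖ := by
  obtain ⟨s, hs, c, hc, rfl⟩ := mem_sup.mp (hsup ▸ mem_top : a ∈ K ⊔ L)
  have hK : ‖s‖ - α * ‖c‖ ≤ ‖K.starProjection (s + c)‖ :=
    norm_sub_mul_norm_le_norm_map_add K.starProjection
      (starProjection_eq_self_iff.mpr hs)
      (norm_apply_le_of_norm_comp_starProjection_le _ L hKL hc)
  have hL : ‖c‖ - α * ‖s‖ ≤ ‖L.starProjection (c + s)‖ :=
    norm_sub_mul_norm_le_norm_map_add L.starProjection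
      (starProjection_eq_self_iff.mpr hc)
      (norm_apply_le_of_norm_comp_starProjection_le _ K hLK hs)
  rw [add_comm c s] at hL
  calc (1 - α) * ‖s + c‖ ≤ (1 - α) * (‖s‖ + ‖c‖) :=
        mul_le_mul_of_nonneg_left (norm_add_le s c) (sub_nonneg.mpr hα)
    _ ≤ _ := by linarith

end Submodule

theorem norm_equivalence_projections_general
    {E : Type*} [NormedAddCommGroup E] [InnerProductSpace ℝ E] [FiniteDimensional ℝ E]
    (S Sc : Submodule ℝ E) (hsup : S ⊔ Sc = ⊤)
    (α : ℝ) (hα1 : α < 1)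
    (hSSc : ‖(S.subtypeL ∘L S.orthogonalProjectionOnto) ∘L
        (Sc.subtypeL ∘L Sc.orthogonalProjectionOnto)‖ ≤ α)
    (hScS : ‖(Sc.subtypeL ∘L Sc.orthogonalProjectionOnto) ∘L
        (S.subtypeL ∘L S.orthogonalProjectionOnto)‖ ≤ α) :
    ∀ a : E,
      ‖(S.orthogonalProjectionOnto a : E)‖ + ‖(Sc.orthogonalProjectionOnto a : E)‖ ≤ 2 * ‖a‖ ∧
      ‖a‖ ≤ (2 / (1 - α)) *
        (‖(S.orthogonalProjectionOnto a : E)‖ + ‖(Sc.orthogonalProjectionOnto a : E)‖) := by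
  intro a
  have hS : ‖(S.orthogonalProjectionOnto a : E)‖ ≤ ‖a‖ := S.norm_starProjection_apply_le a
  have hSc : ‖(Sc.orthogonalProjectionOnto a : E)‖ ≤ ‖a‖ := Sc.norm_starProjection_apply_le a
  have hlower : (1 - α) * ‖a‖ ≤
      ‖(S.orthogonalProjectionOnto a : E)‖ + ‖(Sc.orthogonalProjectionOnto a : E)‖ :=
    S.one_sub_mul_norm_le_norm_starProjection_add Sc hsup hα1.le hSSc hScS a
  refine ⟨by linarith, ?_⟩
  rw [div_mul_eq_mul_div, le_div_iff₀ (by linarith)]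
  linarith [norm_nonneg (S.orthogonalProjectionOnto a : E),
    norm_nonneg (Sc.orthogonalProjectionOnto a : E)]

/-- Let `E` be a finite-dimensional real inner product space, `S`, `Sc`
subspaces with `S ⊓ Sc = ⊥` and `S ⊔ Sc = ⊤`, with orthogonal projections `π_S`, `π_Sc`.
Let `α ∈ [0,1)` be such that `‖π_S ∘ π_Sc‖ ≤ α` and `‖π_Sc ∘ π_S‖ ≤ α` (operator norms).
Then for every `a ∈ E` one has `‖π_S a‖ + ‖π_Sc a‖ ≤ 2 ‖a‖` and
`‖a‖ ≤ (2/(1−α)) (‖π_S a‖ + ‖π_Sc a‖)`. -/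
theorem norm_equivalence_projections
    {E : Type*} [NormedAddCommGroup E] [InnerProductSpace ℝ E] [FiniteDimensional ℝ E]
    (S Sc : Submodule ℝ E) (hinf : S ⊓ Sc = ⊥) (hsup : S ⊔ Sc = ⊤)
    (α : ℝ) (hα0 : 0 ≤ α) (hα1 : α < 1)
    (hSSc : ‖(S.subtypeL ∘L S.orthogonalProjectionOnto) ∘L
        (Sc.subtypeL ∘L Sc.orthogonalProjectionOnto)‖ ≤ α)
    (hScS : ‖(Sc.subtypeL ∘L Sc.orthogonalProjectionOnto) ∘L
        (S.subtypeL ∘L S.orthogonalProjectionOnto)‖ ≤ α) :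
    ∀ a : E,
      ‖(S.orthogonalProjectionOnto a : E)‖ + ‖(Sc.orthogonalProjectionOnto a : E)‖ ≤ 2 * ‖a‖ ∧
      ‖a‖ ≤ (2 / (1 - α)) *
        (‖(S.orthogonalProjectionOnto a : E)‖ + ‖(Sc.orthogonalProjectionOnto a : E)‖) :=
  norm_equivalence_projections_general S Sc hsup α hα1 hSSc hScS
end

section
/- For every integer ℓ ≥ 1 and every real ρ with 0 < ρ < 1 there exists a real C > 0, depending only on ℓ and ρ, with the following property: for every Lebesgue-measurable set T ⊆ ℝ³ with B(0,ρ) ⊆ T ⊆ B(0,1) and every polynomial vector field u : ℝ³ → ℝ³ whose components have total degree at most ℓ, there exists a polynomial vector field z : ℝ³ → ℝ³ whose components have total degree at most ℓ−1 such that curl(x ↦ x × z(x)) = curl u as functions on ℝ³, and ∫_T ‖x × z(x)‖² dx ≤ C² ∫_T ‖curl u(x)‖² dx. (This is the normalized form of the estimate ‖(curl)⁻¹‖ ≲ h_T for the isomorphism curl : x × (P^{ℓ−1})³ → curl (P^{ℓ})³ on a polyhedron T of diameter h_T containing a ball of radius ρ h_T.) -/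
open MvPolynomial MeasureTheory

/-- The curl of a polynomial vector field on `ℝ³`, as a polynomial vector field. -/
noncomputable def polyCurl (w : Fin 3 → MvPolynomial (Fin 3) ℝ) :
    Fin 3 → MvPolynomial (Fin 3) ℝ :=
  ![pderiv 1 (w 2) - pderiv 2 (w 1),
    pderiv 2 (w 0) - pderiv 0 (w 2),
    pderiv 0 (w 1) - pderiv 1 (w 0)]

/-- The polynomial vector field `x ↦ x × z(x)` (Koszul cross field). -/
noncomputable def koszulCross (z : Fin 3 → MvPolynomial (Fin 3) ℝ) :
    Fin 3 → MvPolynomial (Fin 3) ℝ :=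
  ![X 1 * z 2 - X 2 * z 1, X 2 * z 0 - X 0 * z 2, X 0 * z 1 - X 1 * z 0]

/-- Evaluation of a polynomial vector field at a point of `ℝ³`. -/
noncomputable def polyVecEval (p : Fin 3 → MvPolynomial (Fin 3) ℝ)
    (x : EuclideanSpace ℝ (Fin 3)) : EuclideanSpace ℝ (Fin 3) :=
  (WithLp.equiv 2 (Fin 3 → ℝ)).symm fun i => eval (fun j => x j) (p i)

/-!
For a divergence-free field `w` whose components are homogeneous of degree `k`, Euler's identity
`∑ xᵢ ∂ᵢ w = k w` gives `curl (x × w) = x div w - (k + 2) w = -(k + 2) w`. Since `curl u` is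
divergence-free and its homogeneous components have degree `< ℓ`, dividing the `k`-th component
by `-(k + 2)` yields `z`, linear in `curl u`, with `curl (x × z) = curl u`.

The estimate is an equivalence of norms on the finite-dimensional space of polynomial fields of
degree `≤ ℓ - 1`: a polynomial vanishing on a ball is zero, so `v ↦ ‖v‖_{L²(B(0,ρ))}` is a norm
there, and every linear map into `L²(B(0,1))` is bounded for it. Finally
`B(0,ρ) ⊆ T ⊆ B(0,1)` lets one pass from the balls to `T`.
-/

namespace MvPolynomial

theorem pderiv_pderiv_comm {σ R : Type*} [CommRing R] (i j : σ) (p : MvPolynomial σ R) :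
    pderiv i (pderiv j p) = pderiv j (pderiv i p) := by
  have hX : ∀ a b k : σ, pderiv a (pderiv b (X k : MvPolynomial σ R)) = 0 := fun a b k => by
    rcases eq_or_ne k b with rfl | hkb
    · rw [pderiv_X_self, pderiv_one]
    · rw [pderiv_X_of_ne hkb, map_zero]
  have h : ⁅pderiv i, pderiv j⁆ = (0 : Derivation R (MvPolynomial σ R) (MvPolynomial σ R)) :=
    derivation_ext fun k => by
      rw [Derivation.commutator_apply, hX, hX, sub_zero, Derivation.zero_apply]
  rw [← sub_eq_zero, ← Derivation.commutator_apply, h, Derivation.zero_apply]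

variable {σ R : Type*} [CommSemiring R]

theorem homogeneousComponent_pderiv (k : ℕ) (i : σ) (p : MvPolynomial σ R) :
    homogeneousComponent k (pderiv i p) = pderiv i (homogeneousComponent (k + 1) p) := by
  ext d
  simp only [coeff_homogeneousComponent, coeff_pderiv, map_add, Finsupp.degree_single,
    add_left_inj, ite_mul, zero_mul]

theorem sum_range_homogeneousComponent {n : ℕ} {p : MvPolynomial σ R}
    (h : ∀ k, n ≤ k → homogeneousComponent k p = 0) :
    ∑ k ∈ Finset.range n, homogeneousComponent k p = p := by
  set N := max n (p.totalDegree + 1)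
  calc ∑ k ∈ Finset.range n, homogeneousComponent k p
      = ∑ k ∈ Finset.range N, homogeneousComponent k p :=
        Finset.sum_subset (Finset.range_subset_range.2 (le_max_left _ _))
          fun k _ hk => h k (by simpa using hk)
    _ = ∑ k ∈ Finset.range (p.totalDegree + 1), homogeneousComponent k p :=
        (Finset.sum_subset (Finset.range_subset_range.2 (le_max_right _ _))
          fun k _ hk => homogeneousComponent_eq_zero k p (by simpa using hk)).symm
    _ = p := sum_homogeneousComponent p

theorem totalDegree_le_of_homogeneousComponent_eq_zero {n : ℕ} {p : MvPolynomial σ R}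
    (h : ∀ k, n < k → homogeneousComponent k p = 0) : p.totalDegree ≤ n := by
  rw [← sum_range_homogeneousComponent (n := n + 1) fun k hk => h k hk]
  refine totalDegree_finsetSum_le fun k hk => ?_
  exact (homogeneousComponent_isHomogeneous k p).totalDegree_le.trans
    (Nat.lt_succ_iff.1 (Finset.mem_range.1 hk))

theorem eq_zero_of_eval_eq_zero_on_isOpen {ι : Type*} [Fintype ι] {p : MvPolynomial ι ℝ}
    {U : Set (ι → ℝ)} (hU : IsOpen U) (hne : U.Nonempty) (h : ∀ x ∈ U, eval x p = 0) :
    p = 0 := by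
  obtain ⟨a, ha⟩ := hne
  obtain ⟨r, hr, hrU⟩ := Metric.isOpen_iff.1 hU a ha
  refine funext_set (fun i => Metric.ball (a i) r) (fun i => ?_) fun x hx => ?_
  · rw [Real.ball_eq_Ioo]; exact Set.Ioo_infinite (by linarith)
  · rw [h x (hrU (by rwa [ball_pi a hr])), map_zero]

end MvPolynomial

noncomputable def polyDiv (w : Fin 3 → MvPolynomial (Fin 3) ℝ) : MvPolynomial (Fin 3) ℝ :=
  pderiv 0 (w 0) + pderiv 1 (w 1) + pderiv 2 (w 2)

theorem polyDiv_polyCurl (u : Fin 3 → MvPolynomial (Fin 3) ℝ) : polyDiv (polyCurl u) = 0 := by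
  simp only [polyDiv, polyCurl, Matrix.cons_val, map_sub]
  rw [pderiv_pderiv_comm 1 0, pderiv_pderiv_comm 2 0, pderiv_pderiv_comm 2 1]
  ring

theorem polyDiv_homogeneousComponent_eq_zero {w : Fin 3 → MvPolynomial (Fin 3) ℝ}
    (hw : polyDiv w = 0) (k : ℕ) : polyDiv (fun i => homogeneousComponent k (w i)) = 0 := by
  rcases k with _ | k
  · simp [polyDiv, homogeneousComponent_zero]
  · unfold polyDiv at hw ⊢
    simp only [← homogeneousComponent_pderiv, ← map_add, hw, map_zero]

theorem polyCurl_koszulCross_of_isHomogeneous {w : Fin 3 → MvPolynomial (Fin 3) ℝ} {k : ℕ}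
    (hw : ∀ i, (w i).IsHomogeneous k) (hdiv : polyDiv w = 0) :
    polyCurl (koszulCross w) = (-((k : ℝ) + 2)) • w := by
  have euler : ∀ i, X 0 * pderiv 0 (w i) + X 1 * pderiv 1 (w i) + X 2 * pderiv 2 (w i)
      = (k : MvPolynomial (Fin 3) ℝ) * w i := fun i => by
    simpa [Fin.sum_univ_three, nsmul_eq_mul] using (hw i).sum_X_mul_pderiv
  have hdiv' : pderiv 0 (w 0) + pderiv 1 (w 1) + pderiv 2 (w 2) = 0 := hdiv
  ext1 i
  fin_cases i <;>
    simp only [Fin.zero_eta, Fin.mk_one, Fin.reduceFinMk, polyCurl, koszulCross, Matrix.cons_val,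
      map_sub, pderiv_mul, pderiv_X_self, pderiv_X_of_ne, ne_eq, Fin.reduceEq, not_false_eq_true,
      Pi.smul_apply, smul_eq_C_mul, map_neg, map_add, map_natCast, map_ofNat]
  · linear_combination X 0 * hdiv' - euler 0
  · linear_combination X 1 * hdiv' - euler 1
  · linear_combination X 2 * hdiv' - euler 2

noncomputable def polyCurlₗ :
    (Fin 3 → MvPolynomial (Fin 3) ℝ) →ₗ[ℝ] Fin 3 → MvPolynomial (Fin 3) ℝ where
  toFun := polyCurl
  map_add' v w := by
    ext1 i
    fin_cases i <;>
      simp only [Fin.zero_eta, Fin.mk_one, Fin.reduceFinMk, polyCurl, Pi.add_apply, map_add,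
        Matrix.cons_val] <;> ring
  map_smul' c v := by ext1 i; fin_cases i <;> simp [polyCurl, smul_sub]

@[simp] theorem polyCurlₗ_apply (v : Fin 3 → MvPolynomial (Fin 3) ℝ) :
    polyCurlₗ v = polyCurl v :=
  rfl

noncomputable def koszulCrossₗ :
    (Fin 3 → MvPolynomial (Fin 3) ℝ) →ₗ[ℝ] Fin 3 → MvPolynomial (Fin 3) ℝ where
  toFun := koszulCross
  map_add' v w := by
    ext1 i
    fin_cases i <;>
      simp only [Fin.zero_eta, Fin.mk_one, Fin.reduceFinMk, koszulCross, Pi.add_apply,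
        Matrix.cons_val] <;> ring
  map_smul' c v := by ext1 i; fin_cases i <;> simp [koszulCross, smul_sub]

@[simp] theorem koszulCrossₗ_apply (v : Fin 3 → MvPolynomial (Fin 3) ℝ) :
    koszulCrossₗ v = koszulCross v :=
  rfl

noncomputable def curlKoszulInverse (ℓ : ℕ) :
    (Fin 3 → MvPolynomial (Fin 3) ℝ) →ₗ[ℝ] Fin 3 → MvPolynomial (Fin 3) ℝ :=
  ∑ k ∈ Finset.range ℓ, (-((k : ℝ) + 2))⁻¹ • (homogeneousComponent k).compLeft (Fin 3)

theorem curlKoszulInverse_apply (ℓ : ℕ) (v : Fin 3 → MvPolynomial (Fin 3) ℝ) :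
    curlKoszulInverse ℓ v =
      ∑ k ∈ Finset.range ℓ, (-((k : ℝ) + 2))⁻¹ • fun i => homogeneousComponent k (v i) := by
  simp only [curlKoszulInverse, LinearMap.sum_apply, LinearMap.smul_apply]
  rfl

theorem totalDegree_curlKoszulInverse_le (ℓ : ℕ) (v : Fin 3 → MvPolynomial (Fin 3) ℝ)
    (i : Fin 3) : (curlKoszulInverse ℓ v i).totalDegree ≤ ℓ - 1 := by
  rw [curlKoszulInverse_apply, Finset.sum_apply]
  refine totalDegree_finsetSum_le fun k hk => (totalDegree_smul_le _ _).trans ?_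
  exact (homogeneousComponent_isHomogeneous k (v i)).totalDegree_le.trans
    (Nat.le_sub_one_of_lt (Finset.mem_range.1 hk))

theorem polyCurl_koszulCross_curlKoszulInverse {ℓ : ℕ} {v : Fin 3 → MvPolynomial (Fin 3) ℝ}
    (hdiv : polyDiv v = 0) (hv : ∀ k, ℓ ≤ k → ∀ i, homogeneousComponent k (v i) = 0) :
    polyCurl (koszulCross (curlKoszulInverse ℓ v)) = v := by
  have hterm (k : ℕ) : (-((k : ℝ) + 2))⁻¹ •
      polyCurl (koszulCross fun i => homogeneousComponent k (v i)) =
        fun i => homogeneousComponent k (v i) := by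
    rw [polyCurl_koszulCross_of_isHomogeneous (fun i => homogeneousComponent_isHomogeneous k _)
      (polyDiv_homogeneousComponent_eq_zero hdiv k), smul_smul,
      inv_mul_cancel₀ (neg_ne_zero.2 (by positivity)), one_smul]
  rw [← polyCurlₗ_apply, ← koszulCrossₗ_apply, curlKoszulInverse_apply]
  simp only [map_sum, map_smul, polyCurlₗ_apply, koszulCrossₗ_apply, hterm]
  ext1 i
  rw [Finset.sum_apply]
  exact sum_range_homogeneousComponent fun k hk => hv k hk i

theorem homogeneousComponent_polyCurl (k : ℕ) (u : Fin 3 → MvPolynomial (Fin 3) ℝ) (i : Fin 3) :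
    homogeneousComponent k (polyCurl u i) =
      polyCurl (fun j => homogeneousComponent (k + 1) (u j)) i := by
  fin_cases i <;> simp [polyCurl, homogeneousComponent_pderiv]

theorem homogeneousComponent_polyCurl_eq_zero {ℓ k : ℕ} {u : Fin 3 → MvPolynomial (Fin 3) ℝ}
    (hu : ∀ i, (u i).totalDegree ≤ ℓ) (hk : ℓ ≤ k) (i : Fin 3) :
    homogeneousComponent k (polyCurl u i) = 0 := by
  have hzero : (fun j => homogeneousComponent (k + 1) (u j)) = 0 :=
    funext fun j => homogeneousComponent_eq_zero _ _ (by have := hu j; omega)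
  rw [homogeneousComponent_polyCurl, hzero, ← polyCurlₗ_apply, map_zero, Pi.zero_apply]

theorem totalDegree_polyCurl_le {ℓ : ℕ} {u : Fin 3 → MvPolynomial (Fin 3) ℝ}
    (hu : ∀ i, (u i).totalDegree ≤ ℓ) (i : Fin 3) : (polyCurl u i).totalDegree ≤ ℓ - 1 :=
  totalDegree_le_of_homogeneousComponent_eq_zero fun _ hk =>
    homogeneousComponent_polyCurl_eq_zero hu (by omega) i

theorem LinearMap.exists_norm_le_mul_norm_of_injective {𝕜 V E F : Type*}
    [NontriviallyNormedField 𝕜] [CompleteSpace 𝕜] [AddCommGroup V] [Module 𝕜 V]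
    [FiniteDimensional 𝕜 V] [NormedAddCommGroup E] [NormedSpace 𝕜 E] [NormedAddCommGroup F]
    [NormedSpace 𝕜 F] (e : V →ₗ[𝕜] E) (he : Function.Injective e) (f : V →ₗ[𝕜] F) :
    ∃ C, 0 < C ∧ ∀ v, ‖f v‖ ≤ C * ‖e v‖ := by
  let g : LinearMap.range e →L[𝕜] F :=
    LinearMap.toContinuousLinearMap (f ∘ₗ (LinearEquiv.ofInjective e he).symm.toLinearMap)
  refine ⟨‖g‖ + 1, by positivity, fun v => ?_⟩
  have hgv : g (LinearEquiv.ofInjective e he v) = f v := by simp [g]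
  calc ‖f v‖ = ‖g (LinearEquiv.ofInjective e he v)‖ := by rw [hgv]
    _ ≤ ‖g‖ * ‖e v‖ := g.le_opNorm _
    _ ≤ (‖g‖ + 1) * ‖e v‖ := by gcongr; linarith

open Metric

theorem continuous_polyVecEval (p : Fin 3 → MvPolynomial (Fin 3) ℝ) :
    Continuous (polyVecEval p) :=
  (PiLp.continuous_toLp 2 _).comp <| continuous_pi fun i =>
    (continuous_eval (p i)).comp (PiLp.continuous_ofLp 2 _)

theorem setIntegral_norm_polyVecEval_sq_mono (p : Fin 3 → MvPolynomial (Fin 3) ℝ)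
    {s t : Set (EuclideanSpace ℝ (Fin 3))} (hst : s ⊆ t) (ht : Bornology.IsBounded t) :
    ∫ x in s, ‖polyVecEval p x‖ ^ 2 ≤ ∫ x in t, ‖polyVecEval p x‖ ^ 2 :=
  setIntegral_mono_set
    ((((continuous_polyVecEval p).norm.pow 2).continuousOn.integrableOn_compact
      ht.isCompact_closure).mono_set subset_closure)
    (ae_of_all _ fun _ => sq_nonneg _) hst.eventuallyLE

theorem memLp_polyVecEval (p : Fin 3 → MvPolynomial (Fin 3) ℝ) (q : ENNReal)
    {s : Set (EuclideanSpace ℝ (Fin 3))} (hs : Bornology.IsBounded s) :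
    MemLp (polyVecEval p) q (volume.restrict s) := by
  have : IsFiniteMeasure (volume.restrict (closure s)) :=
    isFiniteMeasure_restrict.2 hs.closure.measure_lt_top.ne
  obtain ⟨C, hC⟩ :=
    hs.isCompact_closure.exists_bound_of_continuousOn (continuous_polyVecEval p).continuousOn
  exact (MemLp.of_bound (continuous_polyVecEval p).aestronglyMeasurable C
    (ae_restrict_of_forall_mem isClosed_closure.measurableSet hC)).mono_measure
    (Measure.restrict_mono subset_closure le_rfl)

theorem polyVecEval_add (p q : Fin 3 → MvPolynomial (Fin 3) ℝ) :
    polyVecEval (p + q) = polyVecEval p + polyVecEval q := by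
  ext x i
  simp [polyVecEval]

theorem polyVecEval_smul (c : ℝ) (p : Fin 3 → MvPolynomial (Fin 3) ℝ) :
    polyVecEval (c • p) = c • polyVecEval p := by
  ext x i
  simp [polyVecEval]

noncomputable def polyL2 (r : ℝ) : (Fin 3 → MvPolynomial (Fin 3) ℝ) →ₗ[ℝ]
    Lp (EuclideanSpace ℝ (Fin 3)) 2 (volume.restrict (ball (0 : EuclideanSpace ℝ (Fin 3)) r)) where
  toFun p := (memLp_polyVecEval p 2 isBounded_ball).toLp
  map_add' p q := by
    rw [← MemLp.toLp_add, MemLp.toLp_eq_toLp_iff]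
    exact .of_eq (polyVecEval_add p q)
  map_smul' c p := by
    rw [RingHom.id_apply, ← MemLp.toLp_const_smul, MemLp.toLp_eq_toLp_iff]
    exact .of_eq (polyVecEval_smul c p)

theorem norm_polyL2_sq (r : ℝ) (p : Fin 3 → MvPolynomial (Fin 3) ℝ) :
    ‖polyL2 r p‖ ^ 2 = ∫ x in ball 0 r, ‖polyVecEval p x‖ ^ 2 := by
  rw [← real_inner_self_eq_norm_sq, L2.inner_def]
  refine integral_congr_ae ?_
  filter_upwards [(memLp_polyVecEval p 2 isBounded_ball).coeFn_toLp] with x hx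
  rw [polyL2, LinearMap.coe_mk, AddHom.coe_mk, hx, real_inner_self_eq_norm_sq]

theorem polyL2_injective {r : ℝ} (hr : 0 < r) : Function.Injective (polyL2 r) := by
  rw [← LinearMap.ker_eq_bot, LinearMap.ker_eq_bot']
  intro p hp
  have hae : polyVecEval p =ᵐ[volume.restrict (ball 0 r)] 0 :=
    (memLp_polyVecEval p 2 isBounded_ball).coeFn_toLp.symm.trans
      ((congrArg (⇑) hp).eventuallyEq.trans (Lp.coeFn_zero _ _ _))
  have hzero : Set.EqOn (polyVecEval p) 0 (ball 0 r) :=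
    Measure.eqOn_open_of_ae_eq hae isOpen_ball (continuous_polyVecEval p).continuousOn
      continuousOn_const
  ext1 i
  refine eq_zero_of_eval_eq_zero_on_isOpen (U := WithLp.toLp 2 ⁻¹' ball 0 r)
    (isOpen_ball.preimage (PiLp.continuous_toLp 2 _)) ⟨0, by simpa using hr⟩ fun y hy => ?_
  simpa [polyVecEval] using congrArg (· i) (hzero hy)

theorem exists_integral_norm_polyVecEval_le
    (A : (Fin 3 → MvPolynomial (Fin 3) ℝ) →ₗ[ℝ] Fin 3 → MvPolynomial (Fin 3) ℝ) (m : ℕ)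
    {ρ : ℝ} (hρ : 0 < ρ) (R : ℝ) :
    ∃ C, 0 < C ∧ ∀ v : Fin 3 → MvPolynomial (Fin 3) ℝ, (∀ i, (v i).totalDegree ≤ m) →
      ∫ x in ball 0 R, ‖polyVecEval (A v) x‖ ^ 2 ≤
        C ^ 2 * ∫ x in ball 0 ρ, ‖polyVecEval v x‖ ^ 2 := by
  let ι := (restrictTotalDegree (Fin 3) ℝ m).subtype.compLeft (Fin 3)
  have hι : Function.Injective ι := fun v w h => funext fun i => Subtype.ext (congrFun h i)
  obtain ⟨C, hC, hbound⟩ := (polyL2 ρ ∘ₗ ι).exists_norm_le_mul_norm_of_injective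
    ((polyL2_injective hρ).comp hι) (polyL2 R ∘ₗ A ∘ₗ ι)
  refine ⟨C, hC, fun v hv => ?_⟩
  rw [← norm_polyL2_sq, ← norm_polyL2_sq, ← mul_pow]
  exact pow_le_pow_left₀ (norm_nonneg _)
    (hbound fun i => ⟨v i, (mem_restrictTotalDegree _ _ _).2 (hv i)⟩) 2

theorem curl_inverse_bound_general (ℓ : ℕ) (ρ : ℝ) (hρ0 : 0 < ρ) :
    ∃ C : ℝ, 0 < C ∧
      ∀ T : Set (EuclideanSpace ℝ (Fin 3)), MeasurableSet T →
        Metric.ball 0 ρ ⊆ T → T ⊆ Metric.ball 0 1 →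
        ∀ u : Fin 3 → MvPolynomial (Fin 3) ℝ, (∀ i, (u i).totalDegree ≤ ℓ) →
          ∃ z : Fin 3 → MvPolynomial (Fin 3) ℝ, (∀ i, (z i).totalDegree ≤ ℓ - 1) ∧
            (∀ x : EuclideanSpace ℝ (Fin 3),
              polyVecEval (polyCurl (koszulCross z)) x = polyVecEval (polyCurl u) x) ∧
            (∫ x in T, ‖polyVecEval (koszulCross z) x‖ ^ 2) ≤
              C ^ 2 * ∫ x in T, ‖polyVecEval (polyCurl u) x‖ ^ 2 := by
  obtain ⟨C, hC, hbound⟩ :=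
    exists_integral_norm_polyVecEval_le (koszulCrossₗ ∘ₗ curlKoszulInverse ℓ) (ℓ - 1) hρ0 1
  refine ⟨C, hC, fun T _ hρT hT1 u hu => ?_⟩
  set z := curlKoszulInverse ℓ (polyCurl u)
  have hcurl : polyCurl (koszulCross z) = polyCurl u :=
    polyCurl_koszulCross_curlKoszulInverse (polyDiv_polyCurl u)
      fun _ hk => homogeneousComponent_polyCurl_eq_zero hu hk
  refine ⟨z, totalDegree_curlKoszulInverse_le ℓ _, fun x => by rw [hcurl], ?_⟩
  calc ∫ x in T, ‖polyVecEval (koszulCross z) x‖ ^ 2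
      ≤ ∫ x in ball 0 1, ‖polyVecEval (koszulCross z) x‖ ^ 2 :=
        setIntegral_norm_polyVecEval_sq_mono _ hT1 isBounded_ball
    _ ≤ C ^ 2 * ∫ x in ball 0 ρ, ‖polyVecEval (polyCurl u) x‖ ^ 2 :=
        hbound _ (totalDegree_polyCurl_le hu)
    _ ≤ C ^ 2 * ∫ x in T, ‖polyVecEval (polyCurl u) x‖ ^ 2 :=
        mul_le_mul_of_nonneg_left
          (setIntegral_norm_polyVecEval_sq_mono _ hρT (isBounded_ball.subset hT1)) (sq_nonneg C)

/-- Normalized form of the estimate `‖(curl)⁻¹‖ ≲ h_T` for the isomorphism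
`curl : x × (P^{ℓ−1})³ → curl (P^ℓ)³` : for every measurable `T` with `B(0,ρ) ⊆ T ⊆ B(0,1)` and
every polynomial vector field `u` of component degree `≤ ℓ`, there is a polynomial vector field
`z` of component degree `≤ ℓ−1` with `curl (x ↦ x × z(x)) = curl u` as functions on `ℝ³` and
`∫_T ‖x × z(x)‖² ≤ C² ∫_T ‖curl u‖²`. -/
theorem curl_inverse_bound (ℓ : ℕ) (hℓ : 1 ≤ ℓ) (ρ : ℝ) (hρ0 : 0 < ρ) (hρ1 : ρ < 1) :
    ∃ C : ℝ, 0 < C ∧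
      ∀ T : Set (EuclideanSpace ℝ (Fin 3)), MeasurableSet T →
        Metric.ball 0 ρ ⊆ T → T ⊆ Metric.ball 0 1 →
        ∀ u : Fin 3 → MvPolynomial (Fin 3) ℝ, (∀ i, (u i).totalDegree ≤ ℓ) →
          ∃ z : Fin 3 → MvPolynomial (Fin 3) ℝ, (∀ i, (z i).totalDegree ≤ ℓ - 1) ∧
            (∀ x : EuclideanSpace ℝ (Fin 3),
              polyVecEval (polyCurl (koszulCross z)) x = polyVecEval (polyCurl u) x) ∧
            (∫ x in T, ‖polyVecEval (koszulCross z) x‖ ^ 2) ≤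
              C ^ 2 * ∫ x in T, ‖polyVecEval (polyCurl u) x‖ ^ 2 :=
  curl_inverse_bound_general ℓ ρ hρ0
end

section
/- Let n ≥ 1 and ℓ ≥ 1 be integers. (i) For every real polynomial r in n variables of total degree at most ℓ−1 there exists a unique real polynomial q in n variables of total degree at most ℓ−1 such that n·q(x) + Σ_{i=1}^{n} x_i ∂_i q(x) = r(x) for all x ∈ ℝⁿ (that is, the divergence of the vector field x ↦ q(x) x equals r). (ii) Moreover, for every real ρ with 0 < ρ < 1 there exists C > 0 depending only on n, ℓ and ρ such that, for every Lebesgue-measurable set T ⊆ ℝⁿ with B(0,ρ) ⊆ T ⊆ B(0,1), the polynomial q of (i) satisfies ∫_T ‖x‖² q(x)² dx ≤ C² ∫_T r(x)² dx. (This is the normalized form of the estimate ‖(div)⁻¹‖ ≲ h for the isomorphism div : x P^{ℓ−1} → P^{ℓ−1}.) -/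
/-!
The operator `q ↦ n q + ∑ xᵢ ∂ᵢq = div (q x)` multiplies the coefficient of `x^α` by `n + |α|`.
Hence it is injective and does not increase the total degree, so it is bijective on the
finite-dimensional space `P_d` of polynomials of total degree `≤ d`.

For the estimate, restriction to a nonempty open ball is an injective linear map from polynomials
to `L²` of that ball, because a polynomial vanishing on an open set is zero. On the
finite-dimensional space `P_d`, the `L²(B(0,1))`-norm of `q` is therefore bounded by a constant
times the `L²(B(0,ρ))`-norm of `div (q x)`. Since `B(0,ρ) ⊆ T ⊆ B(0,1)` and `‖x‖ ≤ 1` on `T`,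
the claimed inequality follows.
-/

open MvPolynomial MeasureTheory

section

variable {𝕜 E F G : Type*} [NontriviallyNormedField 𝕜] [CompleteSpace 𝕜]
  [AddCommGroup E] [Module 𝕜 E] [FiniteDimensional 𝕜 E]
  [NormedAddCommGroup F] [NormedSpace 𝕜 F] [NormedAddCommGroup G] [NormedSpace 𝕜 G]

theorem LinearMap.exists_norm_le_mul_norm_of_injective_s9 {Φ : E →ₗ[𝕜] F}
    (hΦ : Function.Injective Φ) (Ψ : E →ₗ[𝕜] G) : ∃ C > 0, ∀ e, ‖Ψ e‖ ≤ C * ‖Φ e‖ := by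
  let e := LinearEquiv.ofInjective Φ hΦ
  obtain ⟨C, hC, hbound⟩ := (LinearMap.toContinuousLinearMap (Ψ ∘ₗ e.symm.toLinearMap)).bound
  refine ⟨C, hC, fun x => ?_⟩
  simpa [e] using hbound (e x)

end

theorem Continuous.integrableOn_of_isBounded {X E : Type*} [PseudoMetricSpace X] [ProperSpace X]
    [MeasurableSpace X] [OpensMeasurableSpace X] [NormedAddCommGroup E] {μ : Measure X}
    [IsFiniteMeasureOnCompacts μ] {f : X → E} (hf : Continuous f) {s : Set X}
    (hs : Bornology.IsBounded s) : IntegrableOn f s μ :=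
  (hf.continuousOn.integrableOn_compact' hs.isCompact_closure
    isClosed_closure.measurableSet).mono_set subset_closure

namespace MvPolynomial

section Algebra

variable {σ R : Type*} [CommSemiring R]

lemma coeff_X_mul_pderiv (i : σ) (p : MvPolynomial σ R) (α : σ →₀ ℕ) :
    coeff α (X i * pderiv i p) = α i * coeff α p := by
  classical
  induction p using MvPolynomial.induction_on' with
  | monomial β a =>
    rw [X_mul_pderiv_monomial, coeff_smul, coeff_monomial]
    split_ifs with h <;> simp [h, nsmul_eq_mul]
  | add p q hp hq => simp only [mul_add, map_add, coeff_add, hp, hq]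

variable [Fintype σ]

noncomputable def divKoszul : MvPolynomial σ R →ₗ[R] MvPolynomial σ R :=
  (Fintype.card σ : R) • LinearMap.id +
    ∑ i, LinearMap.mulLeft R (X i) ∘ₗ (pderiv i).toLinearMap

lemma eval_divKoszul (x : σ → R) (p : MvPolynomial σ R) :
    eval x (divKoszul p) = Fintype.card σ * eval x p + ∑ i, x i * eval x (pderiv i p) := by
  simp [divKoszul]

lemma coeff_divKoszul (p : MvPolynomial σ R) (α : σ →₀ ℕ) :
    coeff α (divKoszul p) = (Fintype.card σ + α.degree) * coeff α p := by
  simp [divKoszul, coeff_sum, coeff_X_mul_pderiv, Finsupp.degree_eq_sum, add_mul, Finset.sum_mul]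

lemma support_divKoszul_subset (p : MvPolynomial σ R) : (divKoszul p).support ⊆ p.support :=
  fun α hα => mem_support_iff.mpr <|
    right_ne_zero_of_mul (by rwa [mem_support_iff, coeff_divKoszul] at hα)

lemma divKoszul_mem_restrictTotalDegree {d : ℕ} {p : MvPolynomial σ R}
    (hp : p ∈ restrictTotalDegree σ R d) : divKoszul p ∈ restrictTotalDegree σ R d := by
  rw [mem_restrictTotalDegree] at hp ⊢
  exact (totalDegree_le_of_support_subset (support_divKoszul_subset p)).trans hp

end Algebra

section Field

variable {σ K : Type*} [Fintype σ] [Nonempty σ] [Field K] [CharZero K]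

lemma divKoszul_injective : Function.Injective (divKoszul : MvPolynomial σ K → _) := by
  refine (injective_iff_map_eq_zero _).mpr fun p hp => MvPolynomial.ext _ _ fun α => ?_
  have hα : (Fintype.card σ + α.degree : K) ≠ 0 := by
    exact_mod_cast (Nat.add_pos_left Fintype.card_pos _).ne'
  simpa [coeff_divKoszul, hα] using congrArg (coeff α) hp

lemma exists_divKoszul_eq {d : ℕ} {r : MvPolynomial σ K}
    (hr : r ∈ restrictTotalDegree σ K d) :
    ∃ q ∈ restrictTotalDegree σ K d, divKoszul q = r := by
  let L := (divKoszul : MvPolynomial σ K →ₗ[K] _).restrict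
    fun _ => divKoszul_mem_restrictTotalDegree (d := d)
  have hL : Function.Surjective L := LinearMap.injective_iff_surjective.mp
    fun p q h => Subtype.ext (divKoszul_injective (congrArg Subtype.val h))
  obtain ⟨q, hq⟩ := hL ⟨r, hr⟩
  exact ⟨q, q.2, congrArg Subtype.val hq⟩

end Field

section Infinite

variable {σ R : Type*} [Fintype σ] [CommRing R] [IsDomain R] [Infinite R]

lemma divKoszul_eq_iff_forall_eval (q r : MvPolynomial σ R) :
    divKoszul q = r ↔ ∀ x : σ → R,
      (Fintype.card σ : R) * eval x q + ∑ i, x i * eval x (pderiv i q) = eval x r := by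
  simp only [MvPolynomial.funext_iff, eval_divKoszul]

end Infinite

section Euclidean

variable {σ : Type*}

lemma continuous_eval_euclidean (p : MvPolynomial σ ℝ) :
    Continuous fun x : EuclideanSpace ℝ σ => eval (fun j => x j) p :=
  p.continuous_eval.comp (PiLp.continuous_ofLp 2 _)

variable [Fintype σ]

lemma eq_zero_of_eval_eq_zero_on_open {U : Set (EuclideanSpace ℝ σ)} (hU : IsOpen U)
    (hne : U.Nonempty) {p : MvPolynomial σ ℝ} (h : ∀ x ∈ U, eval (fun j => x j) p = 0) :
    p = 0 := by
  obtain ⟨x₀, hx₀⟩ := hne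
  have hzero := (AnalyticOnNhd.eval_continuousLinearMap
    (PiLp.continuousLinearEquiv 2 ℝ (fun _ : σ => ℝ) : EuclideanSpace ℝ σ →L[ℝ] σ → ℝ)
    p).eqOn_zero_of_preconnected_of_eventuallyEq_zero isPreconnected_univ (Set.mem_univ x₀)
    (Filter.eventually_of_mem (hU.mem_nhds hx₀) h)
  exact MvPolynomial.funext fun y => by
    simpa [PiLp.coe_continuousLinearEquiv] using hzero (Set.mem_univ (WithLp.toLp 2 y))

variable {s : Set (EuclideanSpace ℝ σ)}

lemma integrableOn_eval_euclidean_sq (hs : Bornology.IsBounded s) (p : MvPolynomial σ ℝ) :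
    IntegrableOn (fun x : EuclideanSpace ℝ σ => eval (fun j => x j) p ^ 2) s :=
  ((continuous_eval_euclidean p).pow 2).integrableOn_of_isBounded hs

lemma memLp_eval_euclidean (hs : Bornology.IsBounded s) (p : MvPolynomial σ ℝ) :
    MemLp (fun x : EuclideanSpace ℝ σ => eval (fun j => x j) p) 2 (volume.restrict s) :=
  (memLp_two_iff_integrable_sq
    (continuous_eval_euclidean p).aestronglyMeasurable).mpr (integrableOn_eval_euclidean_sq hs p)

noncomputable def toL2 (hs : Bornology.IsBounded s) :
    MvPolynomial σ ℝ →ₗ[ℝ] Lp ℝ 2 (volume.restrict s) where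
  toFun p := (memLp_eval_euclidean hs p).toLp
  map_add' p q := by simp_rw [map_add]; exact MemLp.toLp_add _ _
  map_smul' c p := by
    simp_rw [smul_eval, RingHom.id_apply]
    exact MemLp.toLp_const_smul c _

lemma norm_toL2_sq (hs : Bornology.IsBounded s) (p : MvPolynomial σ ℝ) :
    ‖toL2 hs p‖ ^ 2 = ∫ x in s, eval (fun j => x j) p ^ 2 := by
  rw [← real_inner_self_eq_norm_sq, L2.inner_def]
  refine integral_congr_ae ?_
  filter_upwards [MemLp.coeFn_toLp (memLp_eval_euclidean hs p)] with x hx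
  simp [toL2, hx, sq]

lemma toL2_injective (hs : Bornology.IsBounded s) (hso : IsOpen s) (hne : s.Nonempty) :
    Function.Injective (toL2 hs) := by
  refine (injective_iff_map_eq_zero _).mpr fun p hp => ?_
  have hae : (fun x : EuclideanSpace ℝ σ => eval (fun j => x j) p) =ᵐ[volume.restrict s] 0 :=
    (MemLp.coeFn_toLp (memLp_eval_euclidean hs p)).symm.trans (Lp.eq_zero_iff_ae_eq_zero.mp hp)
  exact eq_zero_of_eval_eq_zero_on_open hso hne
    (Measure.eqOn_open_of_ae_eq hae hso (continuous_eval_euclidean p).continuousOn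
      continuousOn_const)

lemma setIntegral_eval_euclidean_sq_mono {t : Set (EuclideanSpace ℝ σ)} (hst : s ⊆ t)
    (ht : Bornology.IsBounded t) (p : MvPolynomial σ ℝ) :
    ∫ x in s, eval (fun j => x j) p ^ 2 ≤ ∫ x in t, eval (fun j => x j) p ^ 2 :=
  setIntegral_mono_set (integrableOn_eval_euclidean_sq ht p)
    (Filter.Eventually.of_forall fun _ => sq_nonneg _) hst.eventuallyLE

lemma setIntegral_norm_sq_mul_eval_sq_le (hs : MeasurableSet s) (hs1 : s ⊆ Metric.ball 0 1)
    (p : MvPolynomial σ ℝ) :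
    ∫ x in s, ‖x‖ ^ 2 * eval (fun j => x j) p ^ 2 ≤
      ∫ x in Metric.ball (0 : EuclideanSpace ℝ σ) 1, eval (fun j => x j) p ^ 2 := by
  have hbdd : Bornology.IsBounded s := Metric.isBounded_ball.subset hs1
  calc ∫ x in s, ‖x‖ ^ 2 * eval (fun j => x j) p ^ 2
      ≤ ∫ x in s, eval (fun j => x j) p ^ 2 := by
        refine setIntegral_mono_on
          (((continuous_norm.pow 2).mul
            ((continuous_eval_euclidean p).pow 2)).integrableOn_of_isBounded hbdd)
          (integrableOn_eval_euclidean_sq hbdd p) hs fun x hx => ?_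
        exact mul_le_of_le_one_left (sq_nonneg _)
          (pow_le_one₀ (norm_nonneg _) (mem_ball_zero_iff.mp (hs1 hx)).le)
    _ ≤ _ := setIntegral_eval_euclidean_sq_mono hs1 Metric.isBounded_ball p

lemma exists_setIntegral_norm_sq_mul_sq_le_divKoszul [Nonempty σ] (d : ℕ) {ρ : ℝ}
    (hρ : 0 < ρ) :
    ∃ C > 0, ∀ T : Set (EuclideanSpace ℝ σ), MeasurableSet T →
      Metric.ball 0 ρ ⊆ T → T ⊆ Metric.ball 0 1 → ∀ q ∈ restrictTotalDegree σ ℝ d,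
        ∫ x in T, ‖x‖ ^ 2 * eval (fun j => x j) q ^ 2 ≤
          C ^ 2 * ∫ x in T, eval (fun j => x j) (divKoszul q) ^ 2 := by
  have hBρ : Bornology.IsBounded (Metric.ball (0 : EuclideanSpace ℝ σ) ρ) :=
    Metric.isBounded_ball
  have hB1 : Bornology.IsBounded (Metric.ball (0 : EuclideanSpace ℝ σ) 1) :=
    Metric.isBounded_ball
  let P := restrictTotalDegree σ ℝ d
  obtain ⟨C, hC, hbound⟩ := LinearMap.exists_norm_le_mul_norm_of_injective_s9
    (Φ := toL2 hBρ ∘ₗ divKoszul ∘ₗ P.subtype)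
    ((toL2_injective hBρ Metric.isOpen_ball ⟨0, Metric.mem_ball_self hρ⟩).comp
      (divKoszul_injective.comp Subtype.val_injective))
    (toL2 hB1 ∘ₗ P.subtype)
  refine ⟨C, hC, fun T hT hρT hT1 q hq => ?_⟩
  have hq' : ‖toL2 hB1 q‖ ≤ C * ‖toL2 hBρ (divKoszul q)‖ := hbound ⟨q, hq⟩
  calc ∫ x in T, ‖x‖ ^ 2 * eval (fun j => x j) q ^ 2
      ≤ ∫ x in Metric.ball (0 : EuclideanSpace ℝ σ) 1, eval (fun j => x j) q ^ 2 :=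
        setIntegral_norm_sq_mul_eval_sq_le hT hT1 q
    _ = ‖toL2 hB1 q‖ ^ 2 := (norm_toL2_sq hB1 q).symm
    _ ≤ (C * ‖toL2 hBρ (divKoszul q)‖) ^ 2 := by gcongr
    _ = C ^ 2 * ∫ x in Metric.ball (0 : EuclideanSpace ℝ σ) ρ,
          eval (fun j => x j) (divKoszul q) ^ 2 := by
        rw [mul_pow, norm_toL2_sq]
    _ ≤ C ^ 2 * ∫ x in T, eval (fun j => x j) (divKoszul q) ^ 2 :=
        mul_le_mul_of_nonneg_left
          (setIntegral_eval_euclidean_sq_mono hρT (hB1.subset hT1) _) (sq_nonneg C)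

end Euclidean

end MvPolynomial

theorem div_koszul_inverse_general (n ℓ : ℕ) (hn : 1 ≤ n) :
    (∀ r : MvPolynomial (Fin n) ℝ, r.totalDegree ≤ ℓ - 1 →
      ∃! q : MvPolynomial (Fin n) ℝ, q.totalDegree ≤ ℓ - 1 ∧
        ∀ x : Fin n → ℝ,
          (n : ℝ) * eval x q + ∑ i, x i * eval x (pderiv i q) = eval x r) ∧
    (∀ ρ : ℝ, 0 < ρ → ρ < 1 → ∃ C : ℝ, 0 < C ∧
      ∀ T : Set (EuclideanSpace ℝ (Fin n)), MeasurableSet T →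
        Metric.ball 0 ρ ⊆ T → T ⊆ Metric.ball 0 1 →
        ∀ r : MvPolynomial (Fin n) ℝ, r.totalDegree ≤ ℓ - 1 →
        ∀ q : MvPolynomial (Fin n) ℝ, q.totalDegree ≤ ℓ - 1 →
          (∀ x : Fin n → ℝ,
            (n : ℝ) * eval x q + ∑ i, x i * eval x (pderiv i q) = eval x r) →
          (∫ x in T, ‖x‖ ^ 2 * (eval (fun j => x j) q) ^ 2) ≤
            C ^ 2 * ∫ x in T, (eval (fun j => x j) r) ^ 2) := by
  have : Nonempty (Fin n) := ⟨⟨0, hn⟩⟩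
  have hdiv (q r : MvPolynomial (Fin n) ℝ) : divKoszul q = r ↔ ∀ x : Fin n → ℝ,
      (n : ℝ) * eval x q + ∑ i, x i * eval x (pderiv i q) = eval x r := by
    simpa using divKoszul_eq_iff_forall_eval q r
  simp_rw [← hdiv, ← mem_restrictTotalDegree]
  refine ⟨fun r hr => ?_, fun ρ hρ _ => ?_⟩
  · obtain ⟨q, hq, rfl⟩ := exists_divKoszul_eq hr
    exact ⟨q, ⟨hq, rfl⟩, fun q' hq' => divKoszul_injective hq'.2⟩
  · obtain ⟨C, hC, hCT⟩ :=
      exists_setIntegral_norm_sq_mul_sq_le_divKoszul (σ := Fin n) (ℓ - 1) hρ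
    exact ⟨C, hC, fun T hT hρT hT1 r _ q hq hqr => hqr ▸ hCT T hT hρT hT1 q hq⟩

/-- (i) For every polynomial `r` in `n ≥ 1` variables of total degree `≤ ℓ−1`
there is a unique polynomial `q` of total degree `≤ ℓ−1` such that the divergence of the vector
field `x ↦ q(x) x`, namely `n q(x) + Σᵢ xᵢ ∂ᵢq(x)`, equals `r(x)` for all `x ∈ ℝⁿ`.
(ii) For every `ρ ∈ (0,1)` there is `C > 0` depending only on `n`, `ℓ`, `ρ` such that for every
measurable `T` with `B(0,ρ) ⊆ T ⊆ B(0,1)` the polynomial `q` of (i) satisfies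
`∫_T ‖x‖² q(x)² ≤ C² ∫_T r(x)²`. This is the normalized form of `‖(div)⁻¹‖ ≲ h` for the
isomorphism `div : x P^{ℓ−1} → P^{ℓ−1}`. -/
theorem div_koszul_inverse (n ℓ : ℕ) (hn : 1 ≤ n) (hℓ : 1 ≤ ℓ) :
    (∀ r : MvPolynomial (Fin n) ℝ, r.totalDegree ≤ ℓ - 1 →
      ∃! q : MvPolynomial (Fin n) ℝ, q.totalDegree ≤ ℓ - 1 ∧
        ∀ x : Fin n → ℝ,
          (n : ℝ) * eval x q + ∑ i, x i * eval x (pderiv i q) = eval x r) ∧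
    (∀ ρ : ℝ, 0 < ρ → ρ < 1 → ∃ C : ℝ, 0 < C ∧
      ∀ T : Set (EuclideanSpace ℝ (Fin n)), MeasurableSet T →
        Metric.ball 0 ρ ⊆ T → T ⊆ Metric.ball 0 1 →
        ∀ r : MvPolynomial (Fin n) ℝ, r.totalDegree ≤ ℓ - 1 →
        ∀ q : MvPolynomial (Fin n) ℝ, q.totalDegree ≤ ℓ - 1 →
          (∀ x : Fin n → ℝ,
            (n : ℝ) * eval x q + ∑ i, x i * eval x (pderiv i q) = eval x r) →
          (∫ x in T, ‖x‖ ^ 2 * (eval (fun j => x j) q) ^ 2) ≤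
            C ^ 2 * ∫ x in T, (eval (fun j => x j) r) ^ 2) :=
  div_koszul_inverse_general n ℓ hn
end
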